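/- arXiv:2208.12473 — 4 statements merged into one kernel-verified Lean document; each statement's English description precedes it below -/
import Mathlib

section
/- Let N ≥ 1 and X, X̃ : ZMod N → ℝ² be two closed polygons with signed areas A(X) = (1/2)∑_i det[X_{i-1}, X_i] and A(X̃) defined analogously. Then A(X) - A(X̃) = ∑_i W_i · (X_i - X̃_i), where W_i = ( (-y_{i-1} - ỹ_{i-1} + y_{i+1} + ỹ_{i+1})/4 , (x_{i-1} + x̃_{i-1} - x_{i+1} - x̃_{i+1})/4 ) and X_i = (x_i, y_i), X̃_i = (x̃_i, ỹ_i). -/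
/-- 2×2 determinant of two vectors in the plane. -/
def det2 (A B : ℝ × ℝ) : ℝ := A.1 * B.2 - A.2 * B.1

/-- Euclidean dot product on ℝ². -/
def dot2 (A B : ℝ × ℝ) : ℝ := A.1 * B.1 + A.2 * B.2

theorem discrete_area_difference (N : ℕ) [NeZero N] (hN : 1 ≤ N)
    (X X' : ZMod N → ℝ × ℝ) :
    (1 / 2 : ℝ) * ∑ i : ZMod N, det2 (X (i - 1)) (X i)
      - (1 / 2 : ℝ) * ∑ i : ZMod N, det2 (X' (i - 1)) (X' i)
    = ∑ i : ZMod N,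
        dot2 ((( -(X (i-1)).2 - (X' (i-1)).2 + (X (i+1)).2 + (X' (i+1)).2) / 4,
               ((X (i-1)).1 + (X' (i-1)).1 - (X (i+1)).1 - (X' (i+1)).1) / 4))
             (X i - X' i) := by
  have shift : ∀ g : ZMod N → ZMod N → ℝ,
      ∑ i : ZMod N, g (i - 1) i = ∑ i : ZMod N, g i (i + 1) :=
    fun g => (Fintype.sum_equiv (Equiv.addRight (1 : ZMod N))
      (fun i => g i (i + 1)) (fun i => g (i - 1) i) (fun i => by simp)).symm
  have h1 : ∑ i : ZMod N, det2 (X (i - 1)) (X i)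
      = ∑ i : ZMod N, det2 (X i) (X (i + 1)) := shift (fun a b => det2 (X a) (X b))
  have h2 : ∑ i : ZMod N, det2 (X' (i - 1)) (X' i)
      = ∑ i : ZMod N, det2 (X' i) (X' (i + 1)) := shift (fun a b => det2 (X' a) (X' b))
  rw [h1, h2]
  set A : ZMod N → ZMod N → ℝ := fun a b =>
    (-(X a).2 - (X' a).2) / 4 * ((X b).1 - (X' b).1)
      + ((X a).1 + (X' a).1) / 4 * ((X b).2 - (X' b).2) with hA
  set B : ZMod N → ZMod N → ℝ := fun a b =>
    ((X b).2 + (X' b).2) / 4 * ((X a).1 - (X' a).1)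
      + (-(X b).1 - (X' b).1) / 4 * ((X a).2 - (X' a).2) with hB
  have hrhs : ∀ i : ZMod N,
      dot2 ((( -(X (i-1)).2 - (X' (i-1)).2 + (X (i+1)).2 + (X' (i+1)).2) / 4,
               ((X (i-1)).1 + (X' (i-1)).1 - (X (i+1)).1 - (X' (i+1)).1) / 4))
             (X i - X' i) = A (i - 1) i + B i (i + 1) := by
    intro i
    simp only [dot2, hA, hB, Prod.fst_sub, Prod.snd_sub]
    ring
  rw [Finset.sum_congr rfl (fun i _ => hrhs i), Finset.sum_add_distrib,
    shift A, ← Finset.sum_add_distrib]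
  rw [Finset.mul_sum, Finset.mul_sum, ← Finset.sum_sub_distrib]
  refine Finset.sum_congr rfl (fun i _ => ?_)
  simp only [det2, hA, hB]
  ring
end

section
/- Let N ≥ 1 and X, X̃ : ZMod N → ℝ² be closed polygons with all edge vectors nonzero, edge lengths r_i = |X_i - X_{i-1}|, r̃_i = |X̃_i - X̃_{i-1}|, and total lengths L = ∑_i r_i, L̃ = ∑_i r̃_i. Then L - L̃ = ∑_i V_i · (X_i - X̃_i), where V_i = (r_i t_i + r̃_i t̃_i)/(r_i + r̃_i) - (r_{i+1} t_{i+1} + r̃_{i+1} t̃_{i+1})/(r_{i+1} + r̃_{i+1}) and t_i = (X_i - X_{i-1})/r_i, t̃_i = (X̃_i - X̃_{i-1})/r̃_i. -/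
open RealInnerProductSpace

theorem discrete_length_difference (N : ℕ) [NeZero N] (hN : 1 ≤ N)
    (X X' : ZMod N → EuclideanSpace ℝ (Fin 2))
    (hX : ∀ i : ZMod N, X i - X (i - 1) ≠ 0)
    (hX' : ∀ i : ZMod N, X' i - X' (i - 1) ≠ 0) :
    (∑ i : ZMod N, ‖X i - X (i - 1)‖) - ∑ i : ZMod N, ‖X' i - X' (i - 1)‖
      = ∑ i : ZMod N,
          ⟪((‖X i - X (i-1)‖ + ‖X' i - X' (i-1)‖)⁻¹ •
              (‖X i - X (i-1)‖ • (‖X i - X (i-1)‖⁻¹ • (X i - X (i-1)))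
                + ‖X' i - X' (i-1)‖ • (‖X' i - X' (i-1)‖⁻¹ • (X' i - X' (i-1)))))
            - ((‖X (i+1) - X i‖ + ‖X' (i+1) - X' i‖)⁻¹ •
              (‖X (i+1) - X i‖ • (‖X (i+1) - X i‖⁻¹ • (X (i+1) - X i))
                + ‖X' (i+1) - X' i‖ • (‖X' (i+1) - X' i‖⁻¹ • (X' (i+1) - X' i)))),
            X i - X' i⟫ := by
  have hne : ∀ i : ZMod N, ‖X i - X (i-1)‖ ≠ 0 := fun i => norm_ne_zero_iff.mpr (hX i)
  have hne' : ∀ i : ZMod N, ‖X' i - X' (i-1)‖ ≠ 0 := fun i => norm_ne_zero_iff.mpr (hX' i)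
  have hneS : ∀ i : ZMod N, X (i+1) - X i ≠ 0 := by
    intro i; simpa using hX (i+1)
  have hneS' : ∀ i : ZMod N, X' (i+1) - X' i ≠ 0 := by
    intro i; simpa using hX' (i+1)
  set W : ZMod N → EuclideanSpace ℝ (Fin 2) := fun i =>
    (‖X i - X (i-1)‖ + ‖X' i - X' (i-1)‖)⁻¹ • ((X i - X (i-1)) + (X' i - X' (i-1))) with hWdef
  have hW : ∀ i : ZMod N,
      ⟪((‖X i - X (i-1)‖ + ‖X' i - X' (i-1)‖)⁻¹ •
              (‖X i - X (i-1)‖ • (‖X i - X (i-1)‖⁻¹ • (X i - X (i-1)))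
                + ‖X' i - X' (i-1)‖ • (‖X' i - X' (i-1)‖⁻¹ • (X' i - X' (i-1)))))
            - ((‖X (i+1) - X i‖ + ‖X' (i+1) - X' i‖)⁻¹ •
              (‖X (i+1) - X i‖ • (‖X (i+1) - X i‖⁻¹ • (X (i+1) - X i))
                + ‖X' (i+1) - X' i‖ • (‖X' (i+1) - X' i‖⁻¹ • (X' (i+1) - X' i)))),
            X i - X' i⟫ = ⟪W i - W (i+1), X i - X' i⟫ := by
    intro i
    have e1 := smul_inv_smul₀ (hne i) (X i - X (i-1))
    have e2 := smul_inv_smul₀ (hne' i) (X' i - X' (i-1))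
    have e3 := smul_inv_smul₀ (norm_ne_zero_iff.mpr (hneS i)) (X (i+1) - X i)
    have e4 := smul_inv_smul₀ (norm_ne_zero_iff.mpr (hneS' i)) (X' (i+1) - X' i)
    rw [e1, e2, e3, e4]
    simp [hWdef]
  rw [Finset.sum_congr rfl fun i _ => hW i]
  have step1 : ∑ i : ZMod N, ⟪W i - W (i+1), X i - X' i⟫
      = (∑ i : ZMod N, ⟪W i, X i - X' i⟫) - ∑ i : ZMod N, ⟪W (i+1), X i - X' i⟫ := by
    rw [← Finset.sum_sub_distrib]
    exact Finset.sum_congr rfl fun i _ => inner_sub_left _ _ _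
  have step2 : ∑ i : ZMod N, ⟪W (i+1), X i - X' i⟫
      = ∑ i : ZMod N, ⟪W i, X (i-1) - X' (i-1)⟫ := by
    apply Fintype.sum_equiv (Equiv.addRight (1 : ZMod N))
    intro i
    simp
  have step3 : (∑ i : ZMod N, ⟪W i, X i - X' i⟫) - ∑ i : ZMod N, ⟪W i, X (i-1) - X' (i-1)⟫
      = ∑ i : ZMod N, ⟪W i, (X i - X (i-1)) - (X' i - X' (i-1))⟫ := by
    rw [← Finset.sum_sub_distrib]
    apply Finset.sum_congr rfl
    intro i _
    rw [← inner_sub_right]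
    congr 1
    abel
  have step4 : ∀ i : ZMod N,
      ⟪W i, (X i - X (i-1)) - (X' i - X' (i-1))⟫ = ‖X i - X (i-1)‖ - ‖X' i - X' (i-1)‖ := by
    intro i
    have hpos : ‖X i - X (i-1)‖ + ‖X' i - X' (i-1)‖ ≠ 0 := by
      exact ne_of_gt (add_pos_of_pos_of_nonneg (lt_of_le_of_ne (norm_nonneg _) (Ne.symm (hne i))) (norm_nonneg _))
    rw [hWdef]
    rw [real_inner_smul_left, inner_sub_right, inner_add_left, inner_add_left,
      real_inner_self_eq_norm_sq, real_inner_self_eq_norm_sq,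
      real_inner_comm (X' i - X' (i-1)) (X i - X (i-1))]
    field_simp
    ring
  rw [step1, step2, step3, Finset.sum_congr rfl fun i _ => step4 i, Finset.sum_sub_distrib]
end

section
/- Let C(t) be a smooth closed planar curve evolving by ∂X/∂t = -δB + λ δL + μ δA, where δB, δL = kN, δA = N are the L²-gradients of bending energy, length, and enclosed area, and λ, μ solve (δL, -δB + λδL + μδA) = 0 and (δA, -δB + λδL + μδA) = 0, with δL, δA linearly independent in L²(C(t)). Then dB/dt = -det(Gram(δB, δL, δA))/det(Gram(δL, δA)) ≤ 0, and dL/dt = dA/dt = 0. -/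
open RealInnerProductSpace

lemma gram_det_pos {H : Type*} [NormedAddCommGroup H] [InnerProductSpace ℝ H]
    {l a : H} (hla : LinearIndependent ℝ ![l, a]) :
    0 < ⟪l,l⟫ * ⟪a,a⟫ - ⟪l,a⟫ * ⟪a,l⟫ := by
  rw [linearIndependent_fin2] at hla
  obtain ⟨ha0, hns⟩ := hla
  simp only [Matrix.cons_val_one, Matrix.head_cons, Matrix.cons_val_zero] at ha0 hns
  have hl0 : l ≠ 0 := fun h => hns 0 (by simp [h])
  have hna : ‖a‖ ≠ 0 := norm_ne_zero_iff.mpr ha0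
  have h1 : ⟪a, l⟫ < ‖a‖ * ‖l‖ := by
    rw [inner_lt_norm_mul_iff_real]
    intro h
    apply hns (‖l‖ / ‖a‖)
    rw [div_eq_mul_inv, mul_comm, mul_smul, h, smul_smul, inv_mul_cancel₀ hna, one_smul]
  have h2 : ⟪a, -l⟫ < ‖a‖ * ‖-l‖ := by
    rw [inner_lt_norm_mul_iff_real]
    intro h
    apply hns (-(‖l‖ / ‖a‖))
    rw [norm_neg] at h
    have : (‖l‖/‖a‖) • a = -l := by
      rw [div_eq_mul_inv, mul_comm, mul_smul, h, smul_smul, inv_mul_cancel₀ hna, one_smul]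
    rw [neg_smul, this, neg_neg]
  rw [inner_neg_right, norm_neg] at h2
  have hll : ⟪l,l⟫ = ‖l‖ * ‖l‖ := real_inner_self_eq_norm_mul_norm l
  have haa : ⟪a,a⟫ = ‖a‖ * ‖a‖ := real_inner_self_eq_norm_mul_norm a
  have hc : ⟪l,a⟫ = ⟪a,l⟫ := real_inner_comm a l
  nlinarith [norm_nonneg l, norm_nonneg a]

/-- Abstract formalization of the Helfrich flow energy structure: `b`, `l`, `a`
stand for the L²-gradients δB, δL, δA of the bending energy, the length, and the
enclosed area over the curve, `v` for the velocity ∂X/∂t, and the inner product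
for the L² inner product over the curve. -/
theorem helfrich_flow_energy_structure
    {H : Type*} [NormedAddCommGroup H] [InnerProductSpace ℝ H]
    (b l a v : H) (hla : LinearIndependent ℝ ![l, a]) (lam mu : ℝ)
    (hv : v = -b + lam • l + mu • a)
    (hl : ⟪l, v⟫ = 0) (ha : ⟪a, v⟫ = 0)
    (dB dL dA : ℝ)
    (hdB : dB = ⟪b, v⟫) (hdL : dL = ⟪l, v⟫) (hdA : dA = ⟪a, v⟫) :
    dB = -(Matrix.det !![⟪b,b⟫, ⟪b,l⟫, ⟪b,a⟫;
                         ⟪l,b⟫, ⟪l,l⟫, ⟪l,a⟫;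
                         ⟪a,b⟫, ⟪a,l⟫, ⟪a,a⟫])
          / (Matrix.det !![⟪l,l⟫, ⟪l,a⟫; ⟪a,l⟫, ⟪a,a⟫])
    ∧ dB ≤ 0 ∧ dL = 0 ∧ dA = 0 := by
  have hdet := gram_det_pos hla
  -- expand the inner products
  have hl' : -⟪l,b⟫ + lam * ⟪l,l⟫ + mu * ⟪l,a⟫ = 0 := by
    rw [hv] at hl
    simpa [inner_add_right, inner_neg_right, real_inner_smul_right] using hl
  have ha' : -⟪a,b⟫ + lam * ⟪a,l⟫ + mu * ⟪a,a⟫ = 0 := by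
    rw [hv] at ha
    simpa [inner_add_right, inner_neg_right, real_inner_smul_right] using ha
  have hbv : ⟪b,v⟫ = -⟪b,b⟫ + lam * ⟪b,l⟫ + mu * ⟪b,a⟫ := by
    rw [hv]; simp [inner_add_right, inner_neg_right, real_inner_smul_right]
  have hvv : ⟪b,v⟫ = -⟪v,v⟫ := by
    have : ⟪v,v⟫ = -⟪b,v⟫ + lam * ⟪l,v⟫ + mu * ⟪a,v⟫ := by
      nth_rewrite 1 [hv]
      simp [inner_add_left, inner_neg_left, real_inner_smul_left]
    rw [this, hl, ha]; ring
  have hbneg : ⟪b,v⟫ ≤ 0 := by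
    rw [hvv]; simp [real_inner_self_nonneg]
  have hbl : ⟪b,l⟫ = ⟪l,b⟫ := real_inner_comm l b
  have hba : ⟪b,a⟫ = ⟪a,b⟫ := real_inner_comm a b
  have hlasym : ⟪l,a⟫ = ⟪a,l⟫ := real_inner_comm a l
  have hd2 : Matrix.det !![⟪l,l⟫, ⟪l,a⟫; ⟪a,l⟫, ⟪a,a⟫]
      = ⟪l,l⟫*⟪a,a⟫ - ⟪l,a⟫*⟪a,l⟫ := by
    simp [Matrix.det_fin_two_of]
  have hd3 : Matrix.det !![⟪b,b⟫, ⟪b,l⟫, ⟪b,a⟫;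
                           ⟪l,b⟫, ⟪l,l⟫, ⟪l,a⟫;
                           ⟪a,b⟫, ⟪a,l⟫, ⟪a,a⟫]
      = ⟪b,b⟫*(⟪l,l⟫*⟪a,a⟫ - ⟪l,a⟫*⟪a,l⟫) - ⟪b,l⟫*(⟪l,b⟫*⟪a,a⟫ - ⟪l,a⟫*⟪a,b⟫)
        + ⟪b,a⟫*(⟪l,b⟫*⟪a,l⟫ - ⟪l,l⟫*⟪a,b⟫) := by
    simp [Matrix.det_fin_three]; ring
  refine ⟨?_, by rw [hdB]; exact hbneg, by rw [hdL, hl], by rw [hdA, ha]⟩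
  rw [hdB, hbv, hd3, hd2, eq_div_iff (by nlinarith), hbl, hba, hlasym]
  linear_combination (⟪l,b⟫*⟪a,a⟫ - ⟪a,b⟫*⟪a,l⟫) * hl' + (⟪a,b⟫*⟪l,l⟫ - ⟪l,b⟫*⟪a,l⟫) * ha' - (mu*⟪l,b⟫*⟪a,a⟫ - mu*⟪a,b⟫*⟪a,l⟫) * hlasym
end

section
/- Let N ≥ 1, weights r̂_i > 0 and define the weighted inner product (X,Y)_d = ∑_{i=1}^N X_i·Y_i r̂_i on (ℝ²)^N. Suppose B-related vector b, constraint vectors l, a ∈ (ℝ²)^N, tangential term u ∈ (ℝ²)^N, and λ, μ, γ satisfy the three equations (l, -b + λl + μa + u + γb)_d = 0, (a, -b + λl + μa + u + γb)_d = 0, and (b, -b + λl + μa + u + γb)_d + D = 0 where D = det(Gram_d(b,l,a))/det(Gram_d(l,a)). If X^{(n+1)} - X^{(n)} = Δt(-b + λl + μa + u + γb), and the discrete energies satisfy L^{(n+1)} - L^{(n)} = (l, X^{(n+1)} - X^{(n)})_d, A^{(n+1)} - A^{(n)} = (a, X^{(n+1)} - X^{(n)})_d, B^{(n+1)} - B^{(n)}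 = (b, X^{(n+1)} - X^{(n)})_d, then L^{(n+1)} = L^{(n)}, A^{(n+1)} = A^{(n)}, and B^{(n+1)} - B^{(n)} = -Δt·D ≤ 0 provided l, a are linearly independent with respect to (·,·)_d. -/
/-!
Rescaling the `i`-th point by `√(r i)` makes `(·,·)_d` the Euclidean inner product on
`ℝ^(N×2)`, so the matrices in `D` are genuine Gram matrices: the `3 × 3` one has nonnegative
determinant and the `2 × 2` one, of the independent pair `l, a`, has positive determinant.
Hence `D ≥ 0`. The scheme's increment is `Δt` times the vector in the three equations, so
pairing it with `l`, `a`, `b` gives the changes `0`, `0`, `-Δt D` of `L`, `A`, `B`.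
-/

/-- Weighted discrete inner product `(X,Y)_d = ∑ i, X_i · Y_i * r̂_i` on `(ℝ²)^N`. -/
def wdot {N : ℕ} (r : Fin N → ℝ) (X Y : Fin N → ℝ × ℝ) : ℝ :=
  ∑ i, ((X i).1 * (Y i).1 + (X i).2 * (Y i).2) * r i

section WeightedInner

variable {N : ℕ} {r : Fin N → ℝ}

lemma wdot_smul_right (c : ℝ) (X Y : Fin N → ℝ × ℝ) :
    wdot r X (c • Y) = c * wdot r X Y := by
  simp only [wdot, Finset.mul_sum, Pi.smul_apply, Prod.smul_fst, Prod.smul_snd, smul_eq_mul]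
  exact Finset.sum_congr rfl fun i _ => by ring

noncomputable def weightedEmbedding (r : Fin N → ℝ) :
    (Fin N → ℝ × ℝ) →ₗ[ℝ] EuclideanSpace ℝ (Fin N × Fin 2) where
  toFun X := WithLp.toLp 2 fun p => √(r p.1) * ![(X p.1).1, (X p.1).2] p.2
  map_add' X Y := by
    ext ⟨i, k⟩
    fin_cases k <;> simp <;> ring
  map_smul' c X := by
    ext ⟨i, k⟩
    fin_cases k <;> simp <;> ring

lemma wdot_eq_inner_weightedEmbedding (hr : ∀ i, 0 ≤ r i) (X Y : Fin N → ℝ × ℝ) :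
    wdot r X Y = inner ℝ (weightedEmbedding r X) (weightedEmbedding r Y) := by
  simp only [wdot, weightedEmbedding, LinearMap.coe_mk, AddHom.coe_mk, PiLp.inner_apply,
    RCLike.inner_apply, Real.ringHom_apply, Fintype.sum_prod_type, Fin.sum_univ_two,
    Matrix.cons_val_zero, Matrix.cons_val_one, Matrix.cons_val_fin_one]
  refine Finset.sum_congr rfl fun i _ => ?_
  linear_combination (-((X i).1 * (Y i).1 + (X i).2 * (Y i).2)) * Real.mul_self_sqrt (hr i)

lemma weightedEmbedding_injective (hr : ∀ i, 0 < r i) :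
    Function.Injective (weightedEmbedding r) := by
  rw [← LinearMap.ker_eq_bot, LinearMap.ker_eq_bot']
  intro X hX
  funext i
  have h0 := congrArg (· (i, 0)) hX
  have h1 := congrArg (· (i, 1)) hX
  have hs : √(r i) ≠ 0 := (Real.sqrt_pos.2 (hr i)).ne'
  simp only [weightedEmbedding, LinearMap.coe_mk, AddHom.coe_mk, Matrix.cons_val_zero,
    Matrix.cons_val_one, Matrix.cons_val_fin_one, PiLp.zero_apply, mul_eq_zero, hs, false_or]
    at h0 h1
  exact Prod.ext h0 h1

variable {ι : Type*}

lemma wdotGram_eq_gram (hr : ∀ i, 0 ≤ r i) (v : ι → Fin N → ℝ × ℝ) :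
    Matrix.of (fun i j => wdot r (v i) (v j)) = Matrix.gram ℝ (weightedEmbedding r ∘ v) := by
  ext i j
  simp [Matrix.gram_apply, wdot_eq_inner_weightedEmbedding hr]

variable [Fintype ι] [DecidableEq ι]

lemma det_wdotGram_nonneg (hr : ∀ i, 0 ≤ r i) (v : ι → Fin N → ℝ × ℝ) :
    0 ≤ (Matrix.of fun i j => wdot r (v i) (v j)).det := by
  rw [wdotGram_eq_gram hr]
  exact (Matrix.posSemidef_gram ℝ _).det_nonneg

lemma det_wdotGram_pos (hr : ∀ i, 0 < r i) {v : ι → Fin N → ℝ × ℝ}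
    (hv : LinearIndependent ℝ v) : 0 < (Matrix.of fun i j => wdot r (v i) (v j)).det := by
  rw [wdotGram_eq_gram fun i => (hr i).le]
  refine (Matrix.posDef_gram_of_linearIndependent ?_).det_pos
  exact hv.map' _ (LinearMap.ker_eq_bot.2 (weightedEmbedding_injective hr))

end WeightedInner

theorem helfrich_scheme_structure_preservation_general
    (N : ℕ) (r : Fin N → ℝ) (hr : ∀ i, 0 < r i)
    (b l a u : Fin N → ℝ × ℝ) (hla : LinearIndependent ℝ ![l, a])
    (lam mu γ Δt : ℝ) (hΔt : 0 < Δt)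
    (D : ℝ)
    (hD : D = (Matrix.det !![wdot r b b, wdot r b l, wdot r b a;
                             wdot r l b, wdot r l l, wdot r l a;
                             wdot r a b, wdot r a l, wdot r a a])
        / (Matrix.det !![wdot r l l, wdot r l a; wdot r a l, wdot r a a]))
    (h1 : wdot r l (-b + lam • l + mu • a + u + γ • b) = 0)
    (h2 : wdot r a (-b + lam • l + mu • a + u + γ • b) = 0)
    (h3 : wdot r b (-b + lam • l + mu • a + u + γ • b) + D = 0)
    (X0 X1 : Fin N → ℝ × ℝ)
    (hX : X1 - X0 = Δt • (-b + lam • l + mu • a + u + γ • b))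
    (L0 L1 A0 A1 B0 B1 : ℝ)
    (hL : L1 - L0 = wdot r l (X1 - X0))
    (hA : A1 - A0 = wdot r a (X1 - X0))
    (hB : B1 - B0 = wdot r b (X1 - X0)) :
    L1 = L0 ∧ A1 = A0 ∧ B1 - B0 = -Δt * D ∧ B1 - B0 ≤ 0 := by
  have hgram3 : !![wdot r b b, wdot r b l, wdot r b a;
      wdot r l b, wdot r l l, wdot r l a;
      wdot r a b, wdot r a l, wdot r a a] =
      Matrix.of fun i j => wdot r (![b, l, a] i) (![b, l, a] j) := by
    ext i j; fin_cases i <;> fin_cases j <;> rfl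
  have hgram2 : !![wdot r l l, wdot r l a; wdot r a l, wdot r a a] =
      Matrix.of fun i j => wdot r (![l, a] i) (![l, a] j) := by
    ext i j; fin_cases i <;> fin_cases j <;> rfl
  have hD_nonneg : 0 ≤ D := by
    rw [hD, hgram3, hgram2]
    exact div_nonneg (det_wdotGram_nonneg (fun i => (hr i).le) _) (det_wdotGram_pos hr hla).le
  rw [hX, wdot_smul_right] at hL hA hB
  have hB' : B1 - B0 = -Δt * D := by linear_combination hB + Δt * h3
  refine ⟨by linear_combination hL + Δt * h1, by linear_combination hA + Δt * h2, hB', ?_⟩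
  rw [hB']
  exact mul_nonpos_of_nonpos_of_nonneg (neg_nonpos.2 hΔt.le) hD_nonneg

theorem helfrich_scheme_structure_preservation
    (N : ℕ) (hN : 1 ≤ N) (r : Fin N → ℝ) (hr : ∀ i, 0 < r i)
    (b l a u : Fin N → ℝ × ℝ) (hla : LinearIndependent ℝ ![l, a])
    (lam mu γ Δt : ℝ) (hΔt : 0 < Δt)
    (D : ℝ)
    (hD : D = (Matrix.det !![wdot r b b, wdot r b l, wdot r b a;
                             wdot r l b, wdot r l l, wdot r l a;
                             wdot r a b, wdot r a l, wdot r a a])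
        / (Matrix.det !![wdot r l l, wdot r l a; wdot r a l, wdot r a a]))
    (h1 : wdot r l (-b + lam • l + mu • a + u + γ • b) = 0)
    (h2 : wdot r a (-b + lam • l + mu • a + u + γ • b) = 0)
    (h3 : wdot r b (-b + lam • l + mu • a + u + γ • b) + D = 0)
    (X0 X1 : Fin N → ℝ × ℝ)
    (hX : X1 - X0 = Δt • (-b + lam • l + mu • a + u + γ • b))
    (L0 L1 A0 A1 B0 B1 : ℝ)
    (hL : L1 - L0 = wdot r l (X1 - X0))
    (hA : A1 - A0 = wdot r a (X1 - X0))
    (hB : B1 - B0 = wdot r b (X1 - X0)) :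
    L1 = L0 ∧ A1 = A0 ∧ B1 - B0 = -Δt * D ∧ B1 - B0 ≤ 0 :=
  helfrich_scheme_structure_preservation_general N r hr b l a u hla lam mu γ Δt hΔt D hD h1 h2 h3 X0
    X1 hX L0 L1 A0 A1 B0 B1 hL hA hB
end
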